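/- arXiv:2502.05496 — 2 statements merged into one kernel-verified Lean document; each statement's English description precedes it below -/
import Mathlib

section
/- Let E be a real inner product space, let Θ, p, q ∈ E, and let λ, μ be real numbers with λ ≥ μ ≥ 1. If ⟨p − q, p − Θ⟩ ≥ 0, then ‖(Θ + λ·(p − Θ)) − (Θ + μ·(q − Θ))‖ ≥ ‖p − q‖. -/
/-!
Write the displacement after the explosion as `μ • (p - q) + (λ - μ) • (p - Θ)`. The two summands
make a nonnegative inner product, so the norm of the sum is at least `‖μ • (p - q)‖ ≥ ‖p - q‖`.
-/

open RealInnerProductSpace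

section

variable {E : Type*} [NormedAddCommGroup E] [InnerProductSpace ℝ E]

theorem norm_le_norm_add_of_inner_nonneg {x y : E} (h : 0 ≤ ⟪x, y⟫) : ‖x‖ ≤ ‖x + y‖ := by
  have hsq : ‖x‖ ^ 2 ≤ ‖x + y‖ ^ 2 := by
    rw [norm_add_sq_real]
    linarith [sq_nonneg ‖y‖]
  exact pow_le_pow_iff_left₀ (norm_nonneg _) (norm_nonneg _) two_ne_zero |>.mp hsq

theorem norm_le_norm_smul_add_smul_of_inner_nonneg {x y : E} {a b : ℝ} (ha : 1 ≤ a) (hb : 0 ≤ b)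
    (h : 0 ≤ ⟪x, y⟫) : ‖x‖ ≤ ‖a • x + b • y‖ := by
  have ha₀ : 0 ≤ a := zero_le_one.trans ha
  have hinner : 0 ≤ ⟪a • x, b • y⟫ := by
    rw [real_inner_smul_left, real_inner_smul_right]
    positivity
  calc ‖x‖ ≤ a * ‖x‖ := le_mul_of_one_le_left (norm_nonneg x) ha
    _ = ‖a • x‖ := by rw [norm_smul, Real.norm_of_nonneg ha₀]
    _ ≤ ‖a • x + b • y‖ := norm_le_norm_add_of_inner_nonneg hinner

end

theorem sub_radial_scaling_eq {R M : Type*} [Ring R] [AddCommGroup M] [Module R M]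
    (Θ p q : M) (a b : R) :
    (Θ + a • (p - Θ)) - (Θ + b • (q - Θ)) = b • (p - q) + (a - b) • (p - Θ) := by
  simp only [sub_smul, smul_sub]
  abel

/-- If particles `p` and `q` move radially away from `Θ` with scaling factors
`λ ≥ μ ≥ 1` and `⟨p - q, p - Θ⟩ ≥ 0`, then their distance does not decrease. -/
theorem dist_nondecreasing_after_radial_scaling
    {E : Type*} [NormedAddCommGroup E] [InnerProductSpace ℝ E]
    (Θ p q : E) (lam mu : ℝ) (hmu : 1 ≤ mu) (hlm : mu ≤ lam)
    (h : 0 ≤ (inner ℝ (p - q) (p - Θ) : ℝ)) :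
    ‖(Θ + lam • (p - Θ)) - (Θ + mu • (q - Θ))‖ ≥ ‖p - q‖ := by
  rw [sub_radial_scaling_eq]
  exact norm_le_norm_smul_add_smul_of_inner_nonneg hmu (sub_nonneg.2 hlm) h
end

section
/- Let E be a real inner product space, let Θ, p, q ∈ E with ‖p − Θ‖ = ‖q − Θ‖, and let λ, μ be real numbers with λ ≥ 1 and μ ≥ 1. Then ‖(Θ + λ·(p − Θ)) − (Θ + μ·(q − Θ))‖ ≥ ‖p − q‖. -/
/-! Put `a = p - Θ`, `b = q - Θ`. For vectors of equal norm the polarization identity gives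
`‖λ a - μ b‖² = (λ - μ)² ‖a‖² + λ μ ‖a - b‖²`, so the distance can only grow once `λ μ ≥ 1`. -/

section EqualNorm

variable {E : Type*} [NormedAddCommGroup E] [InnerProductSpace ℝ E] {a b : E}

theorem norm_smul_sub_smul_sq_of_norm_eq (h : ‖a‖ = ‖b‖) (lam mu : ℝ) :
    ‖lam • a - mu • b‖ ^ 2 = (lam - mu) ^ 2 * ‖a‖ ^ 2 + lam * mu * ‖a - b‖ ^ 2 := by
  rw [norm_sub_sq_real, norm_sub_sq_real, norm_smul, norm_smul, real_inner_smul_left,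
    real_inner_smul_right, Real.norm_eq_abs, Real.norm_eq_abs, mul_pow, mul_pow, sq_abs,
    sq_abs, ← h]
  ring

theorem norm_sub_le_norm_smul_sub_smul_of_norm_eq (h : ‖a‖ = ‖b‖) {lam mu : ℝ}
    (hlm : 1 ≤ lam * mu) : ‖a - b‖ ≤ ‖lam • a - mu • b‖ := by
  have hsq : ‖a - b‖ ^ 2 ≤ ‖lam • a - mu • b‖ ^ 2 := by
    rw [norm_smul_sub_smul_sq_of_norm_eq h]
    nlinarith [sq_nonneg ((lam - mu) * ‖a‖), sq_nonneg ‖a - b‖]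
  exact (pow_le_pow_iff_left₀ (norm_nonneg _) (norm_nonneg _) two_ne_zero).mp hsq

end EqualNorm

/-- If `p` and `q` are equidistant from `Θ` and move radially away from `Θ` with
scaling factors `λ ≥ 1`, `μ ≥ 1`, their distance does not decrease. -/
theorem dist_nondecreasing_equidistant_radial_scaling
    {E : Type*} [NormedAddCommGroup E] [InnerProductSpace ℝ E]
    (Θ p q : E) (heq : ‖p - Θ‖ = ‖q - Θ‖)
    (lam mu : ℝ) (hlam : 1 ≤ lam) (hmu : 1 ≤ mu) :
    ‖(Θ + lam • (p - Θ)) - (Θ + mu • (q - Θ))‖ ≥ ‖p - q‖ := by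
  have hpq : p - q = (p - Θ) - (q - Θ) := (sub_sub_sub_cancel_right p q Θ).symm
  rw [add_sub_add_left_eq_sub, hpq]
  exact norm_sub_le_norm_smul_sub_smul_of_norm_eq heq (one_le_mul_of_one_le_of_one_le hlam hmu)
end
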